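/- arXiv:2002.08082 — 5 statements merged into one kernel-verified Lean document; each statement's English description precedes it below -/
import Mathlib

section
/- For every node u ∈ V, every ℓ ≥ 0 and every real εₕ > 0, the number of nodes w ∈ V with h ℓ u w ≥ εₕ is at most ⌊(√c)^ℓ / εₕ⌋. -/
/-!
Each step of the walk scales the total mass by `√c` and then splits the mass of `v` evenly
among its in-neighbours, so `∑ w, h ℓ u w ≤ √c ^ ℓ` (with equality when no `I v` is empty), and
all values are nonnegative. At most `⌊√c ^ ℓ / εₕ⌋` nonnegative terms of that sum can each be
at least `εₕ`.
-/

open Finset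

theorem card_filter_le_floor_div_of_sum_le {ι : Type*} (s : Finset ι) {f : ι → ℝ}
    (hf : ∀ x ∈ s, 0 ≤ f x) {M ε : ℝ} (hM : ∑ x ∈ s, f x ≤ M) (hε : 0 < ε) :
    #(s.filter fun x => ε ≤ f x) ≤ ⌊M / ε⌋₊ := by
  refine Nat.le_floor ((le_div_iff₀ hε).2 ?_)
  calc (#(s.filter fun x => ε ≤ f x) : ℝ) * ε = #(s.filter fun x => ε ≤ f x) • ε := by
        rw [nsmul_eq_mul]
    _ ≤ ∑ x ∈ s.filter fun x => ε ≤ f x, f x :=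
        card_nsmul_le_sum _ _ _ fun x hx => (mem_filter.1 hx).2
    _ ≤ ∑ x ∈ s, f x :=
        sum_le_sum_of_subset_of_nonneg (filter_subset _ _) fun x hx _ => hf x hx
    _ ≤ M := hM

theorem natCast_mul_div_self_le (n : ℕ) {a : ℝ} (ha : 0 ≤ a) : (n : ℝ) * (a / n) ≤ a := by
  rcases eq_or_ne (n : ℝ) 0 with hn | hn
  · simpa [hn] using ha
  · rw [mul_div_cancel₀ _ hn]

theorem sum_sum_inNeighbors_div_card_le {V : Type*} [Fintype V] [DecidableEq V]
    (I : V → Finset V) {a : ℝ} (ha : 0 ≤ a) {g : V → ℝ} (hg : ∀ v, 0 ≤ g v) :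
    ∑ w, ∑ v ∈ univ.filter (fun v => w ∈ I v), a / #(I v) * g v ≤ a * ∑ v, g v := by
  rw [sum_comm' (t' := univ) (s' := I) (by simp [and_comm]), mul_sum]
  refine sum_le_sum fun v _ => ?_
  rw [sum_const, nsmul_eq_mul, ← mul_assoc]
  exact mul_le_mul_of_nonneg_right (natCast_mul_div_self_le _ ha) (hg v)

section HittingProbability

variable {V : Type*} [Fintype V] [DecidableEq V] {I : V → Finset V} {c : ℝ}
  {h : ℕ → V → V → ℝ}

theorem hitting_nonneg (h0 : ∀ u w, h 0 u w = if w = u then 1 else 0)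
    (hrec : ∀ ℓ u w, h (ℓ + 1) u w =
      ∑ v ∈ univ.filter (fun v => w ∈ I v), (Real.sqrt c / #(I v)) * h ℓ u v)
    (ℓ : ℕ) (u w : V) : 0 ≤ h ℓ u w := by
  induction ℓ generalizing w with
  | zero => rw [h0]; positivity
  | succ ℓ ih => rw [hrec]; exact sum_nonneg fun v _ => mul_nonneg (by positivity) (ih v)

theorem sum_hitting_le (h0 : ∀ u w, h 0 u w = if w = u then 1 else 0)
    (hrec : ∀ ℓ u w, h (ℓ + 1) u w =
      ∑ v ∈ univ.filter (fun v => w ∈ I v), (Real.sqrt c / #(I v)) * h ℓ u v)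
    (ℓ : ℕ) (u : V) : ∑ w, h ℓ u w ≤ Real.sqrt c ^ ℓ := by
  induction ℓ with
  | zero => simp [h0]
  | succ ℓ ih =>
    simp only [hrec]
    calc _ ≤ Real.sqrt c * ∑ v, h ℓ u v :=
          sum_sum_inNeighbors_div_card_le I (Real.sqrt_nonneg c) (hitting_nonneg h0 hrec ℓ u)
      _ ≤ Real.sqrt c ^ (ℓ + 1) := by
          rw [pow_succ']; exact mul_le_mul_of_nonneg_left ih (Real.sqrt_nonneg c)

end HittingProbability

theorem stmt_3_general {V : Type*} [Fintype V] [DecidableEq V]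
    (I : V → Finset V)
    (c : ℝ)
    (h : ℕ → V → V → ℝ)
    (h0 : ∀ u w, h 0 u w = if w = u then 1 else 0)
    (hrec : ∀ ℓ u w, h (ℓ + 1) u w =
      ∑ v ∈ Finset.univ.filter (fun v => w ∈ I v),
        (Real.sqrt c / (I v).card) * h ℓ u v)
    (u : V) (ℓ : ℕ) (εh : ℝ) (hεh : 0 < εh) :
    (Finset.univ.filter (fun w => εh ≤ h ℓ u w)).card ≤
      ⌊Real.sqrt c ^ ℓ / εh⌋₊ :=
  card_filter_le_floor_div_of_sum_le univ (fun w _ => hitting_nonneg h0 hrec ℓ u w)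
    (sum_hitting_le h0 hrec ℓ u) hεh

theorem stmt_3 {V : Type*} [Fintype V] [DecidableEq V]
    (I : V → Finset V) (hI : ∀ v, (I v).Nonempty)
    (c : ℝ) (hc0 : 0 < c) (hc1 : c < 1)
    (h : ℕ → V → V → ℝ)
    (h0 : ∀ u w, h 0 u w = if w = u then 1 else 0)
    (hrec : ∀ ℓ u w, h (ℓ + 1) u w =
      ∑ v ∈ Finset.univ.filter (fun v => w ∈ I v),
        (Real.sqrt c / (I v).card) * h ℓ u v)
    (u : V) (ℓ : ℕ) (εh : ℝ) (hεh : 0 < εh) :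
    (Finset.univ.filter (fun w => εh ≤ h ℓ u w)).card ≤
      ⌊Real.sqrt c ^ ℓ / εh⌋₊ :=
  stmt_3_general I c h h0 hrec u ℓ εh hεh
end

section
/- For every node u ∈ V, every real εₕ > 0 and every natural number L ≥ 1, the total number of attention nodes counted over levels 1 through L satisfies ∑_{ℓ=1}^{L} |{w ∈ V : h ℓ u w ≥ εₕ}| ≤ ⌊√c / ((1 − √c) · εₕ)⌋. (This is the first part of Lemma 2: the number of attention nodes with respect to u is at most ⌊√c / ((1 − √c)·εₕ)⌋.) -/
/-!
Each step of the √c-walk multiplies its total mass by at most √c, so the level-ℓ hitting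
probabilities are nonnegative and sum to at most √c^ℓ. By Markov's inequality at most √c^ℓ/εₕ
nodes reach the threshold on level ℓ, and summing the geometric series over ℓ ≥ 1 gives
√c/((1 - √c)εₕ).
-/

open Finset

section WalkStep

variable {V : Type*} [Fintype V] [DecidableEq V] (I : V → Finset V) (s : ℝ)

/-- Node `v` sends `s / |I v|` of its mass to each of its in-neighbors. -/
noncomputable def walkStep (f : V → ℝ) (w : V) : ℝ :=
  ∑ v ∈ univ.filter (fun v => w ∈ I v), s / (I v).card * f v

variable {I s}

lemma walkStep_nonneg (hs : 0 ≤ s) {f : V → ℝ} (hf : 0 ≤ f) : 0 ≤ walkStep I s f :=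
  fun _ => sum_nonneg fun v _ => mul_nonneg (by positivity) (hf v)

lemma sum_walkStep_le (hs : 0 ≤ s) {f : V → ℝ} (hf : 0 ≤ f) :
    ∑ w, walkStep I s f w ≤ s * ∑ v, f v := by
  have hsend : ∀ v, ∑ w ∈ I v, s / (I v).card * f v ≤ s * f v := by
    intro v
    rcases (I v).eq_empty_or_nonempty with hv | hv
    · simpa [hv] using mul_nonneg hs (hf v)
    · have hcard : ((I v).card : ℝ) ≠ 0 := by exact_mod_cast hv.card_pos.ne'
      rw [sum_const, nsmul_eq_mul, ← mul_assoc, mul_div_cancel₀ s hcard]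
  calc ∑ w, walkStep I s f w
      = ∑ v, ∑ w ∈ I v, s / (I v).card * f v := by
        simp only [walkStep, sum_filter]
        rw [sum_comm]
        simp only [← sum_filter, filter_mem_eq_inter, univ_inter]
    _ ≤ ∑ v, s * f v := sum_le_sum fun v _ => hsend v
    _ = s * ∑ v, f v := (mul_sum _ _ _).symm

lemma iterate_walkStep_nonneg (hs : 0 ≤ s) {f : V → ℝ} (hf : 0 ≤ f) (n : ℕ) :
    0 ≤ (walkStep I s)^[n] f := by
  induction n with
  | zero => exact hf
  | succ n ih => rw [Function.iterate_succ_apply']; exact walkStep_nonneg hs ih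

lemma sum_iterate_walkStep_le (hs : 0 ≤ s) {f : V → ℝ} (hf : 0 ≤ f) (n : ℕ) :
    ∑ w, (walkStep I s)^[n] f w ≤ s ^ n * ∑ w, f w := by
  induction n with
  | zero => simp
  | succ n ih =>
    rw [Function.iterate_succ_apply', pow_succ', mul_assoc]
    exact (sum_walkStep_le hs (iterate_walkStep_nonneg hs hf n)).trans
      (mul_le_mul_of_nonneg_left ih hs)

end WalkStep

lemma card_filter_le_mul_le_sum {V : Type*} [Fintype V] {f : V → ℝ} (hf : 0 ≤ f) (ε : ℝ) :
    ((univ.filter fun w => ε ≤ f w).card : ℝ) * ε ≤ ∑ w, f w := by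
  calc ((univ.filter fun w => ε ≤ f w).card : ℝ) * ε
      ≤ ∑ w ∈ univ.filter fun w => ε ≤ f w, f w := by
        rw [← nsmul_eq_mul]
        exact card_nsmul_le_sum _ _ _ fun w hw => (mem_filter.mp hw).2
    _ ≤ ∑ w, f w := sum_le_sum_of_subset_of_nonneg (filter_subset _ _) fun w _ _ => hf w

theorem stmt_4_general {V : Type*} [Fintype V] [DecidableEq V]
    (I : V → Finset V)
    (c : ℝ) (hc1 : c < 1)
    (h : ℕ → V → V → ℝ)
    (h0 : ∀ u w, h 0 u w = if w = u then 1 else 0)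
    (hrec : ∀ ℓ u w, h (ℓ + 1) u w =
      ∑ v ∈ Finset.univ.filter (fun v => w ∈ I v),
        (Real.sqrt c / (I v).card) * h ℓ u v)
    (u : V) (εh : ℝ) (hεh : 0 < εh) (L : ℕ) :
    ∑ ℓ ∈ Finset.Icc 1 L, (Finset.univ.filter (fun w => εh ≤ h ℓ u w)).card ≤
      ⌊Real.sqrt c / ((1 - Real.sqrt c) * εh)⌋₊ := by
  set s := Real.sqrt c
  have hs0 : 0 ≤ s := Real.sqrt_nonneg c
  have hs1 : s < 1 := (Real.sqrt_lt' one_pos).2 (by simpa using hc1)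
  have hiter : ∀ ℓ, h ℓ u = (walkStep I s)^[ℓ] (h 0 u) := by
    intro ℓ
    induction ℓ with
    | zero => rfl
    | succ ℓ ih => ext w; rw [Function.iterate_succ_apply', ← ih, hrec]; rfl
  have hstart : 0 ≤ h 0 u := fun w => by rw [h0]; positivity
  have hlevel : ∀ ℓ, ((univ.filter fun w => εh ≤ h ℓ u w).card : ℝ) ≤ s ^ ℓ / εh := by
    intro ℓ
    rw [le_div_iff₀ hεh, hiter]
    refine (card_filter_le_mul_le_sum (iterate_walkStep_nonneg hs0 hstart ℓ) εh).trans ?_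
    simpa [h0] using sum_iterate_walkStep_le hs0 hstart ℓ
  rw [Nat.le_floor_iff (div_nonneg hs0 (mul_nonneg (sub_nonneg.2 hs1.le) hεh.le))]
  push_cast
  calc ∑ ℓ ∈ Icc 1 L, ((univ.filter fun w => εh ≤ h ℓ u w).card : ℝ)
      ≤ ∑ ℓ ∈ Icc 1 L, s ^ ℓ / εh := sum_le_sum fun ℓ _ => hlevel ℓ
    _ = (∑ ℓ ∈ Ico 1 (L + 1), s ^ ℓ) / εh := by rw [sum_div]; rfl
    _ ≤ s / (1 - s) / εh := by
        gcongr
        simpa using geom_sum_Ico_le_of_lt_one (m := 1) (n := L + 1) hs0 hs1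
    _ = s / ((1 - s) * εh) := div_div _ _ _

theorem stmt_4 {V : Type*} [Fintype V] [DecidableEq V]
    (I : V → Finset V) (hI : ∀ v, (I v).Nonempty)
    (c : ℝ) (hc0 : 0 < c) (hc1 : c < 1)
    (h : ℕ → V → V → ℝ)
    (h0 : ∀ u w, h 0 u w = if w = u then 1 else 0)
    (hrec : ∀ ℓ u w, h (ℓ + 1) u w =
      ∑ v ∈ Finset.univ.filter (fun v => w ∈ I v),
        (Real.sqrt c / (I v).card) * h ℓ u v)
    (u : V) (εh : ℝ) (hεh : 0 < εh) (L : ℕ) (hL : 1 ≤ L) :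
    ∑ ℓ ∈ Finset.Icc 1 L, (Finset.univ.filter (fun w => εh ≤ h ℓ u w)).card ≤
      ⌊Real.sqrt c / ((1 - Real.sqrt c) * εh)⌋₊ :=
  stmt_4_general I c hc1 h h0 hrec u εh hεh L
end

section
/- Let u, v ∈ V, let εₕ > 0, and let f : ℕ → V → ℝ satisfy 0 ≤ f ℓ w ≤ h ℓ u w · h ℓ v w for all ℓ ≥ 1 and w ∈ V. Then the function ℓ ↦ ∑_{w ∈ V with h ℓ u w < εₕ} f ℓ w is summable over ℓ ≥ 1, and ∑_{ℓ=1}^{∞} ∑_{w ∈ V with h ℓ u w < εₕ} f ℓ w ≤ √c·εₕ/(1 − √c). (This is the bound s₂(u,v) ≤ √c·εₕ/(1 − √c) used in the proof of Lemma 3, where f ℓ w is the probability that two √c-walks from u and v first meet at w at step ℓ, which is dominated by the meeting probability h ℓ u w · h ℓ v w.) -/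
/-!
On a node `w` below the threshold, `f ℓ w ≤ h ℓ u w * h ℓ v w ≤ εₕ * h ℓ v w`, so the `ℓ`-th term
is at most `εₕ * ∑ w, h ℓ v w`. One step of the walk spreads the mass `√c * h ℓ v x` of a node `x`
over its in-neighbours, so the total mass at level `ℓ` is at most `√c ^ ℓ`, and summing the
geometric series over `ℓ ≥ 1` gives `√c * εₕ / (1 - √c)`.
-/

open Finset

structure IsHittingProbability {V : Type*} [Fintype V] [DecidableEq V] (I : V → Finset V) (a : ℝ)
    (h : ℕ → V → V → ℝ) : Prop where
  zero : ∀ u w, h 0 u w = if w = u then 1 else 0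
  succ : ∀ ℓ u w, h (ℓ + 1) u w =
    ∑ v ∈ univ.filter (fun v => w ∈ I v), (a / (I v).card) * h ℓ u v

namespace IsHittingProbability

variable {V : Type*} [Fintype V] [DecidableEq V] {I : V → Finset V} {a : ℝ}
  {h : ℕ → V → V → ℝ}

theorem nonneg (hh : IsHittingProbability I a h) (ha : 0 ≤ a) : ∀ ℓ u w, 0 ≤ h ℓ u w
  | 0, u, w => by rw [hh.zero]; split_ifs <;> norm_num
  | ℓ + 1, u, w => by
    rw [hh.succ]
    exact sum_nonneg fun v _ => mul_nonneg (by positivity) (hh.nonneg ha ℓ u v)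

theorem sum_le_pow (hh : IsHittingProbability I a h) (ha : 0 ≤ a) :
    ∀ ℓ u, ∑ w, h ℓ u w ≤ a ^ ℓ
  | 0, u => by simp [hh.zero]
  | ℓ + 1, u => by
    -- a node with `I v = ∅` passes on no mass at all (`a / 0 = 0`)
    have hspread : ∀ v, (I v).card * (a / (I v).card) ≤ a := fun v => by
      rcases eq_or_ne ((I v).card : ℝ) 0 with hcard | hcard
      · simpa [hcard] using ha
      · rw [mul_div_cancel₀ _ hcard]
    calc ∑ w, h (ℓ + 1) u w
        = ∑ v, (I v).card * (a / (I v).card) * h ℓ u v := by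
          simp_rw [hh.succ, sum_filter]
          rw [sum_comm]
          simp [sum_ite_mem, mul_assoc]
      _ ≤ ∑ v, a * h ℓ u v :=
          sum_le_sum fun v _ => mul_le_mul_of_nonneg_right (hspread v) (hh.nonneg ha ℓ u v)
      _ ≤ a ^ (ℓ + 1) := by
          rw [← mul_sum, pow_succ']
          exact mul_le_mul_of_nonneg_left (hh.sum_le_pow ha ℓ u) ha

end IsHittingProbability

theorem sum_filter_lt_le_mul_sum {ι : Type*} (s : Finset ι) {p q f : ι → ℝ} {ε : ℝ}
    (hε : 0 ≤ ε) (hq : ∀ i ∈ s, 0 ≤ q i) (hf : ∀ i ∈ s, f i ≤ p i * q i) :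
    ∑ i ∈ s.filter (fun i => p i < ε), f i ≤ ε * ∑ i ∈ s, q i :=
  calc ∑ i ∈ s.filter (fun i => p i < ε), f i
      ≤ ∑ i ∈ s.filter (fun i => p i < ε), ε * q i :=
        sum_le_sum fun i hi => by
          obtain ⟨hs, hlt⟩ := mem_filter.mp hi
          exact (hf i hs).trans (mul_le_mul_of_nonneg_right hlt.le (hq i hs))
    _ ≤ ∑ i ∈ s, ε * q i :=
        sum_le_sum_of_subset_of_nonneg (filter_subset _ s) fun i hi _ => mul_nonneg hε (hq i hi)
    _ = ε * ∑ i ∈ s, q i := (mul_sum ..).symm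

theorem summable_and_tsum_le_of_le_geometric {g : ℕ → ℝ} {r C : ℝ} (hr0 : 0 ≤ r) (hr1 : r < 1)
    (hg0 : ∀ n, 0 ≤ g n) (hg : ∀ n, g n ≤ C * r ^ n) :
    Summable g ∧ ∑' n, g n ≤ C / (1 - r) := by
  have hgeom : HasSum (fun n => C * r ^ n) (C / (1 - r)) :=
    (hasSum_geometric_of_lt_one hr0 hr1).mul_left C
  have hsum : Summable g := hgeom.summable.of_nonneg_of_le hg0 hg
  exact ⟨hsum, hasSum_le hg hsum.hasSum hgeom⟩

theorem stmt_9_general {V : Type*} [Fintype V] [DecidableEq V]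
    (I : V → Finset V)
    (c : ℝ) (hc1 : c < 1)
    (h : ℕ → V → V → ℝ)
    (h0 : ∀ u w, h 0 u w = if w = u then 1 else 0)
    (hrec : ∀ ℓ u w, h (ℓ + 1) u w =
      ∑ v ∈ Finset.univ.filter (fun v => w ∈ I v),
        (Real.sqrt c / (I v).card) * h ℓ u v)
    (u v : V) (εh : ℝ) (hεh : 0 < εh)
    (f : ℕ → V → ℝ)
    (hf : ∀ ℓ, 1 ≤ ℓ → ∀ w, 0 ≤ f ℓ w ∧ f ℓ w ≤ h ℓ u w * h ℓ v w) :
    Summable (fun ℓ : ℕ =>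
      ∑ w ∈ Finset.univ.filter (fun w => h (ℓ + 1) u w < εh), f (ℓ + 1) w) ∧
    ∑' ℓ : ℕ, ∑ w ∈ Finset.univ.filter (fun w => h (ℓ + 1) u w < εh),
        f (ℓ + 1) w ≤ Real.sqrt c * εh / (1 - Real.sqrt c) := by
  have hh : IsHittingProbability I √c h := ⟨h0, hrec⟩
  have hs0 : 0 ≤ √c := Real.sqrt_nonneg c
  have hs1 : √c < 1 := (Real.sqrt_lt' one_pos).mpr (by simpa using hc1)
  refine summable_and_tsum_le_of_le_geometric hs0 hs1
    (fun ℓ => sum_nonneg fun w _ => (hf (ℓ + 1) ℓ.succ_pos w).1) fun ℓ => ?_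
  calc ∑ w ∈ univ.filter (fun w => h (ℓ + 1) u w < εh), f (ℓ + 1) w
      ≤ εh * ∑ w, h (ℓ + 1) v w :=
        sum_filter_lt_le_mul_sum univ hεh.le (fun w _ => hh.nonneg hs0 _ v w)
          fun w _ => (hf (ℓ + 1) ℓ.succ_pos w).2
    _ ≤ εh * √c ^ (ℓ + 1) := by gcongr; exact hh.sum_le_pow hs0 _ v
    _ = √c * εh * √c ^ ℓ := by ring

theorem stmt_9 {V : Type*} [Fintype V] [DecidableEq V]
    (I : V → Finset V) (hI : ∀ v, (I v).Nonempty)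
    (c : ℝ) (hc0 : 0 < c) (hc1 : c < 1)
    (h : ℕ → V → V → ℝ)
    (h0 : ∀ u w, h 0 u w = if w = u then 1 else 0)
    (hrec : ∀ ℓ u w, h (ℓ + 1) u w =
      ∑ v ∈ Finset.univ.filter (fun v => w ∈ I v),
        (Real.sqrt c / (I v).card) * h ℓ u v)
    (u v : V) (εh : ℝ) (hεh : 0 < εh)
    (f : ℕ → V → ℝ)
    (hf : ∀ ℓ, 1 ≤ ℓ → ∀ w, 0 ≤ f ℓ w ∧ f ℓ w ≤ h ℓ u w * h ℓ v w) :
    Summable (fun ℓ : ℕ =>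
      ∑ w ∈ Finset.univ.filter (fun w => h (ℓ + 1) u w < εh), f (ℓ + 1) w) ∧
    ∑' ℓ : ℕ, ∑ w ∈ Finset.univ.filter (fun w => h (ℓ + 1) u w < εh),
        f (ℓ + 1) w ≤ Real.sqrt c * εh / (1 - Real.sqrt c) :=
  stmt_9_general I c hc1 h h0 hrec u v εh hεh f hf
end

section
/- Let r : V → ℝ and let ℓ ≥ 0. Define q : ℕ → V → ℝ by q ℓ = r and, for every k with 0 ≤ k < ℓ, q k v = (√c / |I(v)|) · ∑_{v' ∈ I(v)} q (k+1) v'. Then for every v ∈ V, q 0 v = ∑_{w ∈ V} r w · h ℓ v w. (This is the correctness identity of Reverse-Push without truncation: pushing the residues r of level-ℓ nodes down ℓ levels along out-edges computes, at each node v, the sum of r w weighted by the ℓ-step hitting probability from v to w.) -/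
/-!
Let `P` be the matrix with `P v w = √c / |I(v)|` for `w ∈ I(v)` and `0` otherwise. The recursion
for `h` says `h (ℓ + 1) = h ℓ * P`, so `h ℓ = P ^ ℓ`; the recursion for `q` says
`q k = P *ᵥ q (k + 1)`, so `q 0 = P ^ ℓ *ᵥ r`, which is the claimed identity read row by row.
-/

open Finset Matrix

theorem eq_pow_of_succ_eq_mul {M : Type*} [Monoid M] {f : ℕ → M} {a : M}
    (h0 : f 0 = 1) (hsucc : ∀ n, f (n + 1) = f n * a) (n : ℕ) : f n = a ^ n := by
  induction n with
  | zero => rw [h0, pow_zero]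
  | succ n ih => rw [hsucc, ih, pow_succ]

namespace Matrix

variable {n R : Type*} [Fintype n] [DecidableEq n] [Semiring R]

theorem mulVec_pow_eq_of_eq_mulVec_succ {P : Matrix n n R} {q : ℕ → n → R} {ℓ : ℕ}
    (hq : ∀ k < ℓ, q k = P *ᵥ q (k + 1)) : q 0 = (P ^ ℓ) *ᵥ q ℓ := by
  suffices ∀ k ≤ ℓ, q (ℓ - k) = (P ^ k) *ᵥ q ℓ by simpa using this ℓ le_rfl
  intro k hk
  induction k with
  | zero => simp
  | succ k ih =>
    rw [hq _ (by omega), show ℓ - (k + 1) + 1 = ℓ - k by omega, ih (by omega), mulVec_mulVec,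
      pow_succ']

def weightedAdjMatrix (I : n → Finset n) (a : n → R) : Matrix n n R :=
  Matrix.of fun v w => if w ∈ I v then a v else 0

theorem weightedAdjMatrix_mulVec (I : n → Finset n) (a : n → R) (x : n → R) (v : n) :
    (weightedAdjMatrix I a *ᵥ x) v = a v * ∑ w ∈ I v, x w := by
  simp [weightedAdjMatrix, mulVec, dotProduct, ite_mul, Finset.sum_ite_mem, Finset.mul_sum]

theorem mul_weightedAdjMatrix_apply (I : n → Finset n) (a : n → R) (A : Matrix n n R) (u w : n) :
    (A * weightedAdjMatrix I a) u w = ∑ v ∈ univ.filter (fun v => w ∈ I v), A u v * a v := by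
  simp [weightedAdjMatrix, mul_apply, Finset.sum_filter]

end Matrix

theorem stmt_12_general {V : Type*} [Fintype V] [DecidableEq V]
    (I : V → Finset V)
    (c : ℝ)
    (h : ℕ → V → V → ℝ)
    (h0 : ∀ u w, h 0 u w = if w = u then 1 else 0)
    (hrec : ∀ ℓ u w, h (ℓ + 1) u w =
      ∑ v ∈ Finset.univ.filter (fun v => w ∈ I v),
        (Real.sqrt c / (I v).card) * h ℓ u v)
    (r : V → ℝ) (ℓ : ℕ) (q : ℕ → V → ℝ)
    (hqtop : q ℓ = r)
    (hqrec : ∀ k, k < ℓ → ∀ v, q k v =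
      (Real.sqrt c / (I v).card) * ∑ v' ∈ I v, q (k + 1) v') :
    ∀ v : V, q 0 v = ∑ w, r w * h ℓ v w := by
  intro v
  set P := weightedAdjMatrix I fun v => (Real.sqrt c / (I v).card : ℝ)
  have hpow : Matrix.of (h ℓ) = P ^ ℓ := by
    refine eq_pow_of_succ_eq_mul (f := fun n => Matrix.of (h n)) ?_ (fun n => ?_) ℓ
    · ext u w
      simp [h0, one_apply, eq_comm]
    · ext u w
      rw [mul_weightedAdjMatrix_apply, of_apply, hrec]
      exact sum_congr rfl fun _ _ => mul_comm _ _
  have hq : q 0 = (P ^ ℓ) *ᵥ r := by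
    rw [← hqtop]
    exact mulVec_pow_eq_of_eq_mulVec_succ fun k hk => funext fun v => by
      rw [weightedAdjMatrix_mulVec, hqrec k hk]
  rw [hq, ← hpow]
  simp [mulVec, dotProduct, mul_comm]

theorem stmt_12 {V : Type*} [Fintype V] [DecidableEq V]
    (I : V → Finset V) (hI : ∀ v, (I v).Nonempty)
    (c : ℝ) (hc0 : 0 < c) (hc1 : c < 1)
    (h : ℕ → V → V → ℝ)
    (h0 : ∀ u w, h 0 u w = if w = u then 1 else 0)
    (hrec : ∀ ℓ u w, h (ℓ + 1) u w =
      ∑ v ∈ Finset.univ.filter (fun v => w ∈ I v),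
        (Real.sqrt c / (I v).card) * h ℓ u v)
    (r : V → ℝ) (ℓ : ℕ) (q : ℕ → V → ℝ)
    (hqtop : q ℓ = r)
    (hqrec : ∀ k, k < ℓ → ∀ v, q k v =
      (Real.sqrt c / (I v).card) * ∑ v' ∈ I v, q (k + 1) v') :
    ∀ v : V, q 0 v = ∑ w, r w * h ℓ v w :=
  stmt_12_general I c h h0 hrec r ℓ q hqtop hqrec
end

section
/- Let A be a finite set with a level function lv : A → ℕ, let p : A → ℝ, and let g : A → A → ℝ. Suppose ρ : A → A → ℝ and f̂ : A → ℝ satisfy, for all a, b ∈ A with lv a < lv b, the recursion ρ a b = g a b − ∑_{m ∈ A with lv a < lv m < lv b} ρ a m · g m b, and for all b ∈ A the recursion f̂ b = p b − ∑_{a ∈ A with lv a < lv b} f̂ a · g a b. Then ∑_{b ∈ A} f̂ b = ∑_{a ∈ A} p a · ( 1 − ∑_{b ∈ A with lv a < lv b} ρ a b ). (This is the algebraic identity ŝ₁(u,v) = s⁺(u,v) underlying the proof of Lemma 3: summing the first-meeting quantities f̂ defined by the restricted recursion over attention nodes equals weighting the meeting masses p by the last-meeting corrections 1 − ∑ ρ.)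 -/
/-!
The recursion for `fhat` is triangular with respect to the levels, so it has a unique solution.
Substituting the recursion for `ρ` shows that `b ↦ p b - ∑_{lv a < lv b} p a * ρ a b` is one; summing
it over `b` and exchanging the order of summation gives the identity.
-/

open Finset

section LevelSums

variable {A β R : Type*} [Fintype A] [Preorder β] [DecidableLT β] (lv : A → β)

theorem sum_filter_lt_sum_filter_lt_comm {M : Type*} [AddCommMonoid M] (F : A → A → M) (b : A) :
    ∑ a ∈ univ.filter (fun a => lv a < lv b), ∑ c ∈ univ.filter (fun c => lv c < lv a), F c a =
      ∑ c ∈ univ.filter (fun c => lv c < lv b),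
        ∑ m ∈ univ.filter (fun m => lv c < lv m ∧ lv m < lv b), F c m :=
  sum_comm' fun a c => by
    simp only [mem_filter, mem_univ, true_and]
    exact ⟨fun ⟨hab, hca⟩ => ⟨⟨hca, hab⟩, hca.trans hab⟩, fun ⟨⟨hca, hab⟩, _⟩ => ⟨hab, hca⟩⟩

theorem sum_sum_filter_lt_comm {M : Type*} [AddCommMonoid M] (F : A → A → M) :
    ∑ b, ∑ a ∈ univ.filter (fun a => lv a < lv b), F a b =
      ∑ a, ∑ b ∈ univ.filter (fun b => lv a < lv b), F a b :=
  sum_comm' fun _ _ => by simp only [mem_filter, mem_univ, true_and, and_true]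

variable [Ring R] {p : A → R} {g : A → A → R}

theorem eq_of_triangular_recursion [WellFoundedLT β] {f₁ f₂ : A → R}
    (h₁ : ∀ b, f₁ b = p b - ∑ a ∈ univ.filter (fun a => lv a < lv b), f₁ a * g a b)
    (h₂ : ∀ b, f₂ b = p b - ∑ a ∈ univ.filter (fun a => lv a < lv b), f₂ a * g a b) :
    f₁ = f₂ := by
  funext b
  induction b using (InvImage.wf lv wellFounded_lt).induction with
  | _ b ih =>
    rw [h₁, h₂]
    congr 1
    exact sum_congr rfl fun a ha => by rw [ih a (mem_filter.1 ha).2]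

theorem triangular_recursion_of_first_meeting {ρ : A → A → R}
    (hρ : ∀ a b, lv a < lv b → ρ a b =
      g a b - ∑ m ∈ univ.filter (fun m => lv a < lv m ∧ lv m < lv b), ρ a m * g m b) (b : A) :
    p b - ∑ a ∈ univ.filter (fun a => lv a < lv b), p a * ρ a b =
      p b - ∑ a ∈ univ.filter (fun a => lv a < lv b),
        (p a - ∑ c ∈ univ.filter (fun c => lv c < lv a), p c * ρ c a) * g a b := by
  have hρ' : ∀ c ∈ univ.filter (fun c => lv c < lv b), p c * ρ c b =
      p c * g c b - p c * ∑ m ∈ univ.filter (fun m => lv c < lv m ∧ lv m < lv b),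
        ρ c m * g m b := fun c hc => by
    rw [hρ c b (mem_filter.1 hc).2, mul_sub]
  simp only [sub_mul, sum_sub_distrib, sum_mul, sum_congr rfl hρ', mul_sum, mul_assoc]
  rw [sum_filter_lt_sum_filter_lt_comm lv (fun c a => p c * (ρ c a * g a b))]

end LevelSums

theorem stmt_15_general {A : Type*} [Fintype A]
    (lv : A → ℕ) (p : A → ℝ) (g : A → A → ℝ)
    (ρ : A → A → ℝ) (fhat : A → ℝ)
    (hρ : ∀ a b, lv a < lv b → ρ a b =
      g a b - ∑ m ∈ Finset.univ.filter (fun m => lv a < lv m ∧ lv m < lv b),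
        ρ a m * g m b)
    (hf : ∀ b, fhat b =
      p b - ∑ a ∈ Finset.univ.filter (fun a => lv a < lv b), fhat a * g a b) :
    ∑ b, fhat b =
      ∑ a, p a * (1 - ∑ b ∈ Finset.univ.filter (fun b => lv a < lv b), ρ a b) := by
  have hclosed : fhat = fun b => p b - ∑ a ∈ univ.filter (fun a => lv a < lv b), p a * ρ a b :=
    eq_of_triangular_recursion lv hf (triangular_recursion_of_first_meeting lv hρ)
  rw [hclosed, sum_sub_distrib, sum_sum_filter_lt_comm lv (fun a b => p a * ρ a b),
    ← sum_sub_distrib]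
  simp only [mul_sub, mul_one, mul_sum]

theorem stmt_15 {A : Type*} [Fintype A] [DecidableEq A]
    (lv : A → ℕ) (p : A → ℝ) (g : A → A → ℝ)
    (ρ : A → A → ℝ) (fhat : A → ℝ)
    (hρ : ∀ a b, lv a < lv b → ρ a b =
      g a b - ∑ m ∈ Finset.univ.filter (fun m => lv a < lv m ∧ lv m < lv b),
        ρ a m * g m b)
    (hf : ∀ b, fhat b =
      p b - ∑ a ∈ Finset.univ.filter (fun a => lv a < lv b), fhat a * g a b) :
    ∑ b, fhat b =
      ∑ a, p a * (1 - ∑ b ∈ Finset.univ.filter (fun b => lv a < lv b), ρ a b) :=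
  stmt_15_general lv p g ρ fhat hρ hf
end
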